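/- arXiv:math/0605160 — 3 statements merged into one kernel-verified Lean document; each statement's English description precedes it below -/
import Mathlib

section
/- Let M = (a b; c d) ∈ Sp(2g,ℤ) in g×g block form. The map on characteristics (ε,δ) ↦ (dε − cδ + diag(cᵗd), −bε + aδ + diag(aᵗb)) mod 2 preserves the parity of characteristics: [ε,δ] is even if and only if its image is even. -/
/-!
Reducing `M` mod 2 gives a symplectic matrix `(A B; C D)` over `ZMod 2`, where signs disappear
and, since `xᵢ² = xᵢ`, the quadratic form `x ⬝ᵥ S *ᵥ x` of a symmetric `S` is the linear form
`diag S ⬝ᵥ x`. Expanding the parity of the image, the cross terms give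
`ε ⬝ᵥ (Dᵀ A + Bᵀ C) *ᵥ δ = ε ⬝ᵥ δ`; the terms quadratic in `ε` (resp. `δ`) become linear
forms, and the constant term the trace of `(1 + Bᵀ C) Bᵀ C`, all of which vanish by the relations
`Bᵀ D = Dᵀ B`, `Aᵀ C = Cᵀ A`, `Dᵀ A = 1 + Bᵀ C`, `A Bᵀ = B Aᵀ`, `C Dᵀ = D Cᵀ` of `Sp(2g, 𝔽₂)`.
-/

open scoped Matrix

/-- The standard affine action of an integral symplectic matrix
`M = (a b; c d)` on theta characteristics:
`(ε, δ) ↦ (dε − cδ + diag(cᵗd), −bε + aδ + diag(aᵗb))  (mod 2)`. -/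
def charAction {g : ℕ} (M : Matrix (Fin g ⊕ Fin g) (Fin g ⊕ Fin g) ℤ)
    (ε δ : Fin g → ZMod 2) : (Fin g → ZMod 2) × (Fin g → ZMod 2) :=
  let a := M.toBlocks₁₁
  let b := M.toBlocks₁₂
  let c := M.toBlocks₂₁
  let d := M.toBlocks₂₂
  ((d.map (Int.cast : ℤ → ZMod 2)).mulVec ε -
      (c.map (Int.cast : ℤ → ZMod 2)).mulVec δ +
      fun i => (((c * dᵀ) i i : ℤ) : ZMod 2),
    -(b.map (Int.cast : ℤ → ZMod 2)).mulVec ε +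
      (a.map (Int.cast : ℤ → ZMod 2)).mulVec δ +
      fun i => (((a * bᵀ) i i : ℤ) : ZMod 2))

open Matrix

theorem ZModModule.sum_sum_eq_sum_diag {ι G : Type*} [Fintype ι] [AddCommGroup G]
    [Module (ZMod 2) G] (f : ι → ι → G) (hf : ∀ i j, f i j = f j i) :
    ∑ i, ∑ j, f i j = ∑ i, f i i := by
  classical
  have h_offDiag : ∑ p ∈ Finset.univ.offDiag, f p.1 p.2 = 0 :=
    Finset.sum_involution (fun p _ ↦ p.swap)
      (fun p _ ↦ by rw [Prod.fst_swap, Prod.snd_swap, hf p.2 p.1, ZModModule.add_self])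
      (fun p hp _ h ↦ (Finset.mem_offDiag.1 hp).2.2 (congrArg Prod.snd h))
      (fun p hp ↦ by
        obtain ⟨h₁, h₂, hne⟩ := Finset.mem_offDiag.1 hp
        exact Finset.mem_offDiag.2 ⟨h₂, h₁, hne.symm⟩)
      (fun p _ ↦ p.swap_swap)
  rw [← Finset.sum_product', ← Finset.diag_union_offDiag,
    Finset.sum_union (Finset.disjoint_diag_offDiag _), Finset.sum_diag, h_offDiag, add_zero]

namespace Matrix

theorem mulVec_dotProduct_mulVec {m n o α : Type*} [Fintype m] [Fintype n] [CommSemiring α]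
    [Fintype o] (P : Matrix m n α) (Q : Matrix m o α) (x : n → α) (y : o → α) :
    (P *ᵥ x) ⬝ᵥ (Q *ᵥ y) = x ⬝ᵥ (Pᵀ * Q) *ᵥ y := by
  rw [← mulVec_mulVec, dotProduct_transpose_mulVec, dotProduct_comm]

variable {ι κ : Type*} [Fintype ι]

theorem dotProduct_mulVec_self_of_isSymm {S : Matrix ι ι (ZMod 2)} (hS : S.IsSymm)
    (x : ι → ZMod 2) : x ⬝ᵥ S *ᵥ x = S.diag ⬝ᵥ x := by
  have hsq : ∀ a : ZMod 2, a * a = a := by decide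
  calc x ⬝ᵥ S *ᵥ x = ∑ i, ∑ j, x i * S i j * x j := by
        simp only [dotProduct, mulVec, Finset.mul_sum, mul_assoc]
    _ = ∑ i, x i * S i i * x i :=
        ZModModule.sum_sum_eq_sum_diag _ fun i j ↦ by rw [hS.apply i j]; ring
    _ = S.diag ⬝ᵥ x := Finset.sum_congr rfl fun i _ ↦ by
        rw [mul_right_comm, hsq, mul_comm, diag_apply]

theorem mulVec_diag_of_isSymm (T : Matrix κ ι (ZMod 2)) {S : Matrix ι ι (ZMod 2)}
    (hS : S.IsSymm) : T *ᵥ S.diag = (T * S * Tᵀ).diag := by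
  ext k
  calc (T *ᵥ S.diag) k = S.diag ⬝ᵥ T k := dotProduct_comm _ _
    _ = T k ⬝ᵥ S *ᵥ T k := (dotProduct_mulVec_self_of_isSymm hS _).symm
    _ = (T * S * Tᵀ).diag k := by rw [diag_apply, Matrix.mul_assoc]; rfl

theorem diag_dotProduct_diag_of_isSymm {S T : Matrix ι ι (ZMod 2)} (hS : S.IsSymm)
    (hT : T.IsSymm) : S.diag ⬝ᵥ T.diag = (S * T).trace :=
  (ZModModule.sum_sum_eq_sum_diag (fun i j ↦ S i j * T j i) fun i j ↦ by
    rw [hS.apply i j, hT.apply j i]).symm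

theorem trace_mul_self_zmod_two (X : Matrix ι ι (ZMod 2)) : (X * X).trace = X.trace := by
  have hsq : ∀ a : ZMod 2, a * a = a := by decide
  calc (X * X).trace = ∑ i, X i i * X i i :=
        ZModModule.sum_sum_eq_sum_diag (fun i j ↦ X i j * X j i) fun i j ↦ mul_comm _ _
    _ = X.trace := Finset.sum_congr rfl fun i _ ↦ hsq _

theorem mulVec_add_diag_dotProduct [Fintype κ] {P Q : Matrix κ ι (ZMod 2)}
    {S T : Matrix κ κ (ZMod 2)} (hPQ : (Pᵀ * Q).IsSymm) (hS : S.IsSymm) (hT : T.IsSymm)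
    (x : ι → ZMod 2) :
    (P *ᵥ x + T.diag) ⬝ᵥ (Q *ᵥ x + S.diag) =
      (Pᵀ * Q + Pᵀ * S * P + Qᵀ * T * Q).diag ⬝ᵥ x + T.diag ⬝ᵥ S.diag := by
  have hP : (P *ᵥ x) ⬝ᵥ S.diag = x ⬝ᵥ Pᵀ *ᵥ S.diag := by
    rw [dotProduct_transpose_mulVec, dotProduct_comm]
  have hQ : T.diag ⬝ᵥ (Q *ᵥ x) = x ⬝ᵥ Qᵀ *ᵥ T.diag := by
    rw [dotProduct_transpose_mulVec]
  simp only [add_dotProduct, dotProduct_add, diag_add, hP, hQ, mulVec_dotProduct_mulVec,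
    dotProduct_mulVec_self_of_isSymm hPQ, mulVec_diag_of_isSymm _ hS,
    mulVec_diag_of_isSymm _ hT, transpose_transpose]
  simp only [dotProduct_comm x]
  abel

end Matrix

namespace SymplecticGroup

variable {ι : Type*} [Fintype ι] [DecidableEq ι] {A B C D : Matrix ι ι (ZMod 2)}

theorem fromBlocks_relations_zmod_two (h : fromBlocks A B C D ∈ symplecticGroup ι (ZMod 2)) :
    (Dᵀ * B).IsSymm ∧ (Cᵀ * A).IsSymm ∧ (A * Bᵀ).IsSymm ∧ (C * Dᵀ).IsSymm ∧
      Dᵀ * A = 1 + Bᵀ * C := by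
  obtain ⟨hAC, hBD, hAD⟩ := fromBlocks_mem_iff.1 h
  obtain ⟨hBA, hDC, -⟩ := fromBlocks_mem_iff.1 <| by
    simpa only [fromBlocks_transpose] using transpose_mem h
  simp only [transpose_transpose] at hBA hDC
  refine ⟨?_, ?_, ?_, ?_, sub_eq_iff_eq_add.1 ?_⟩
  · rw [IsSymm, transpose_mul, transpose_transpose, hBD]
  · rw [IsSymm, transpose_mul, transpose_transpose, ← hAC]
  · rw [IsSymm, transpose_mul, transpose_transpose, hBA]
  · rw [IsSymm, transpose_mul, transpose_transpose, hDC]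
  · simpa only [transpose_sub, transpose_mul, transpose_transpose, transpose_one] using
      congrArg transpose hAD

theorem dotProduct_charAction_zmod_two (h : fromBlocks A B C D ∈ symplecticGroup ι (ZMod 2))
    (ε δ : ι → ZMod 2) :
    (D *ᵥ ε + C *ᵥ δ + (C * Dᵀ).diag) ⬝ᵥ (B *ᵥ ε + A *ᵥ δ + (A * Bᵀ).diag) = ε ⬝ᵥ δ := by
  obtain ⟨hDB, hCA, hAB, hCD, hDA⟩ := fromBlocks_relations_zmod_two h
  have hε : Dᵀ * B + Dᵀ * (A * Bᵀ) * D + Bᵀ * (C * Dᵀ) * B = 0 := by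
    calc _ = Dᵀ * B + Dᵀ * A * (Dᵀ * B)ᵀ + Bᵀ * C * (Dᵀ * B) := by
          rw [transpose_mul, transpose_transpose]; noncomm_ring
      _ = Dᵀ * B + (Dᵀ * B + Bᵀ * C * (Dᵀ * B)) + Bᵀ * C * (Dᵀ * B) := by
          rw [hDA, hDB.eq, add_mul, one_mul]
      _ = 0 := by rw [← add_assoc, ZModModule.add_self, zero_add, ZModModule.add_self]
  have hδ : Cᵀ * A + Cᵀ * (A * Bᵀ) * C + Aᵀ * (C * Dᵀ) * A = 0 := by
    calc _ = Cᵀ * A + Cᵀ * A * (Bᵀ * C) + (Cᵀ * A)ᵀ * (Dᵀ * A) := by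
          rw [transpose_mul, transpose_transpose]; noncomm_ring
      _ = Cᵀ * A + Cᵀ * A * (Bᵀ * C) + (Cᵀ * A + Cᵀ * A * (Bᵀ * C)) := by
          rw [hDA, hCA.eq, mul_add, mul_one]
      _ = 0 := ZModModule.add_self _
  have hcross : (D *ᵥ ε) ⬝ᵥ (A *ᵥ δ) + (C *ᵥ δ) ⬝ᵥ (B *ᵥ ε) = ε ⬝ᵥ δ := by
    rw [dotProduct_comm (C *ᵥ δ), mulVec_dotProduct_mulVec, mulVec_dotProduct_mulVec,
      ← dotProduct_add, ← add_mulVec, hDA, add_assoc, ZModModule.add_self, add_zero, one_mulVec]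
  have hconst : (C * Dᵀ).diag ⬝ᵥ (A * Bᵀ).diag = 0 := by
    calc _ = (C * (Dᵀ * A * Bᵀ)).trace := by
          rw [diag_dotProduct_diag_of_isSymm hCD hAB]; simp only [Matrix.mul_assoc]
      _ = (Bᵀ * C + Bᵀ * C * (Bᵀ * C)).trace := by
          rw [trace_mul_comm, hDA]; noncomm_ring
      _ = 0 := by rw [trace_add, trace_mul_self_zmod_two, ZModModule.add_self]
  calc _ = (D *ᵥ ε + (C * Dᵀ).diag) ⬝ᵥ (B *ᵥ ε + (A * Bᵀ).diag)
        + (C *ᵥ δ + (C * Dᵀ).diag) ⬝ᵥ (A *ᵥ δ + (A * Bᵀ).diag)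
        - (C * Dᵀ).diag ⬝ᵥ (A * Bᵀ).diag
        + ((D *ᵥ ε) ⬝ᵥ (A *ᵥ δ) + (C *ᵥ δ) ⬝ᵥ (B *ᵥ ε)) := by
        simp only [add_dotProduct, dotProduct_add]; ring
    _ = ε ⬝ᵥ δ := by
      rw [mulVec_add_diag_dotProduct hDB hAB hCD, mulVec_add_diag_dotProduct hCA hAB hCD,
        hε, hδ, hcross, hconst]
      simp

end SymplecticGroup

theorem charAction_eq_blocks_map {g : ℕ} (M : Matrix (Fin g ⊕ Fin g) (Fin g ⊕ Fin g) ℤ)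
    (ε δ : Fin g → ZMod 2) :
    let N := M.map (Int.castRingHom (ZMod 2))
    charAction M ε δ =
      (N.toBlocks₂₂ *ᵥ ε + N.toBlocks₂₁ *ᵥ δ + (N.toBlocks₂₁ * N.toBlocks₂₂ᵀ).diag,
        N.toBlocks₁₂ *ᵥ ε + N.toBlocks₁₁ *ᵥ δ + (N.toBlocks₁₁ * N.toBlocks₁₂ᵀ).diag) := by
  have hdiag (X Y : Matrix (Fin g) (Fin g) ℤ) : (fun i ↦ ((X * Yᵀ) i i : ZMod 2)) =
      (X.map (Int.castRingHom (ZMod 2)) * (Y.map (Int.castRingHom (ZMod 2)))ᵀ).diag := by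
    rw [← transpose_map, ← Matrix.map_mul]; rfl
  simp only [charAction, ZModModule.sub_eq_add, ZModModule.neg_eq_self, hdiag]
  rfl

/-- The symplectic action on characteristics preserves parity: `[ε, δ]` is
even if and only if its image under `M ∈ Sp(2g, ℤ)` is even. -/
theorem charAction_preserves_parity {g : ℕ}
    (M : Matrix (Fin g ⊕ Fin g) (Fin g ⊕ Fin g) ℤ)
    (hM : M ∈ Matrix.symplecticGroup (Fin g) ℤ) (ε δ : Fin g → ZMod 2) :
    (∑ i, ε i * δ i = 0) ↔
      (∑ i, (charAction M ε δ).1 i * (charAction M ε δ).2 i = 0) := by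
  have hN : M.map (Int.castRingHom (ZMod 2)) ∈ symplecticGroup (Fin g) (ZMod 2) :=
    SymplecticGroup.map_mem hM _
  rw [← fromBlocks_toBlocks (M.map _)] at hN
  change ε ⬝ᵥ δ = 0 ↔ (charAction M ε δ).1 ⬝ᵥ (charAction M ε δ).2 = 0
  rw [charAction_eq_blocks_map, SymplecticGroup.dotProduct_charAction_zmod_two hN]
end

section
/- The group Sp(2g,ℤ) acts transitively on the set of even characteristics in (ℤ/2ℤ)^g × (ℤ/2ℤ)^g via the affine action (ε,δ) ↦ (dε − cδ + diag(cᵗd), −bε + aδ + diag(aᵗb)) mod 2. -/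
open scoped Matrix

/-!
Reading `charAction M` off the two block rows `(c d)` and `(a b)` of `M`, the composition law
`charAction (M * N) = charAction M ∘ charAction N` (for symplectic `N`) reduces to a mod 2
identity between constant terms. It holds because over `ZMod 2` the quadratic form of a symmetric
matrix `S` is the linear form `v ↦ v ⬝ᵥ diag S`. Hence `Sp(2g, ℤ)` acts, and it suffices to move
every even characteristic to `0`. The matrices `(1 B; 0 1)` and `(1 0; C 1)`, `B`, `C` symmetric,
send `(ε, δ)` to `(ε, δ + Bε + diag B)` and `(ε + Cδ + diag C, δ)`; when `ε ⬝ᵥ δ = 0` there is a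
symmetric `S` with `Sε + diag S = δ` (take `δ eⱼᵀ + eⱼ δᵀ` with `ε j = 1`), so one move of each
kind reaches `0`.
-/

namespace ThetaCharacteristic

open Matrix MulAction

variable {n : Type*} [Fintype n] [DecidableEq n]

/-- In characteristic 2 the quadratic form `v ↦ v ⬝ᵥ (S *ᵥ v)` of a symmetric `S` is additive,
so it is determined by its values `c² S i i = c S i i` on the basis vectors. -/
theorem dotProduct_mulVec_self_of_isSymm {S : Matrix n n (ZMod 2)} (hS : S.IsSymm)
    (v : n → ZMod 2) : v ⬝ᵥ (S *ᵥ v) = v ⬝ᵥ S.diag := by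
  let Q : (n → ZMod 2) →+ ZMod 2 :=
    { toFun := fun v => v ⬝ᵥ (S *ᵥ v)
      map_zero' := zero_dotProduct _
      map_add' := fun v w => by
        have hsymm : w ⬝ᵥ (S *ᵥ v) = v ⬝ᵥ (S *ᵥ w) := by
          rw [dotProduct_mulVec, ← mulVec_transpose, hS.eq, dotProduct_comm]
        simp only [mulVec_add, add_dotProduct, dotProduct_add, hsymm]
        exact ZModModule.add_add_add_cancel _ _ _ }
  have hQ : Q = AddMonoidHom.mk' (· ⬝ᵥ S.diag) fun v w => add_dotProduct v w _ := by
    refine AddMonoidHom.functions_ext _ _ _ fun i c => ?_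
    show Pi.single i c ⬝ᵥ (S *ᵥ Pi.single i c) = Pi.single i c ⬝ᵥ S.diag
    have hcol : (S *ᵥ Pi.single i c) i = S i i * c := dotProduct_single _ _ _
    rw [single_dotProduct, single_dotProduct, hcol, diag_apply, mul_comm (S i i), ← mul_assoc,
      ← sq, ZMod.pow_card]
  exact DFunLike.congr_fun hQ v

theorem diag_mul_mul_transpose_of_isSymm {S : Matrix n n (ZMod 2)} (hS : S.IsSymm)
    (X : Matrix n n (ZMod 2)) : (X * S * Xᵀ).diag = X *ᵥ S.diag := by
  ext i
  rw [diag_apply, mul_mul_apply, transpose_transpose, dotProduct_mulVec_self_of_isSymm hS]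
  rfl

theorem diag_mul_transpose_of_symplectic_rows {A B C D : Matrix n n (ZMod 2)}
    (hAB : (A * Bᵀ).IsSymm) (hCD : (C * Dᵀ).IsSymm) (hAD : A * Dᵀ + B * Cᵀ = 1)
    (U V : Matrix n n (ZMod 2)) :
    ((U * A + V * C) * (U * B + V * D)ᵀ).diag =
      U *ᵥ (A * Bᵀ).diag + V *ᵥ (C * Dᵀ).diag + (U * Vᵀ).diag := by
  have hcross : (V * (C * Bᵀ) * Uᵀ).diag = (U * (B * Cᵀ) * Vᵀ).diag := by
    rw [← diag_transpose]
    simp only [transpose_mul, transpose_transpose, Matrix.mul_assoc]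
  calc ((U * A + V * C) * (U * B + V * D)ᵀ).diag
      = (U * (A * Bᵀ) * Uᵀ).diag + (V * (C * Dᵀ) * Vᵀ).diag
          + ((U * (A * Dᵀ) * Vᵀ).diag + (V * (C * Bᵀ) * Uᵀ).diag) := by
        simp only [transpose_add, transpose_mul, Matrix.add_mul, Matrix.mul_add, diag_add,
          Matrix.mul_assoc]
        abel
    _ = (U * (A * Bᵀ) * Uᵀ).diag + (V * (C * Dᵀ) * Vᵀ).diag
          + (U * (A * Dᵀ + B * Cᵀ) * Vᵀ).diag := by
        rw [hcross, Matrix.mul_add, Matrix.add_mul, diag_add]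
    _ = _ := by
      rw [hAD, Matrix.mul_one, diag_mul_mul_transpose_of_isSymm hAB,
        diag_mul_mul_transpose_of_isSymm hCD]

theorem isSymm_and_isSymm_and_eq_one_of_fromBlocks_mem {R : Type*} [CommRing R]
    {a b c d : Matrix n n R} (h : fromBlocks a b c d ∈ symplecticGroup n R) :
    (a * bᵀ).IsSymm ∧ (c * dᵀ).IsSymm ∧ a * dᵀ - b * cᵀ = 1 := by
  have h' := SymplecticGroup.transpose_mem h
  rw [fromBlocks_transpose, SymplecticGroup.fromBlocks_mem_iff] at h'
  simp only [transpose_transpose] at h'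
  obtain ⟨hab, hcd, had⟩ := h'
  exact ⟨by rw [IsSymm, transpose_mul, transpose_transpose, hab],
    by rw [IsSymm, transpose_mul, transpose_transpose, hcd], had⟩

def modTwo : Matrix n n ℤ →+* Matrix n n (ZMod 2) := (Int.castRingHom (ZMod 2)).mapMatrix

theorem modTwo_transpose (X : Matrix n n ℤ) : modTwo Xᵀ = (modTwo X)ᵀ := rfl

theorem exists_isSymm_modTwo_eq {S : Matrix n n (ZMod 2)} (hS : S.IsSymm) :
    ∃ B : Matrix n n ℤ, B.IsSymm ∧ modTwo B = S :=
  ⟨S.map fun x => (x.val : ℤ), hS.map _, by ext; simp [modTwo]⟩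

/-- The half of the action attached to a block row `(u v)`: `charAction (fromBlocks a b c d)` is
`(charComponent c d, charComponent a b)`, the signs of the definition disappearing mod 2. -/
def charComponent (u v : Matrix n n ℤ) (ε δ : n → ZMod 2) : n → ZMod 2 :=
  modTwo v *ᵥ ε + modTwo u *ᵥ δ + (modTwo (u * vᵀ)).diag

theorem charComponent_mul {a b c d : Matrix n n ℤ}
    (hN : fromBlocks a b c d ∈ symplecticGroup n ℤ) (u v : Matrix n n ℤ) (ε δ : n → ZMod 2) :
    charComponent (u * a + v * c) (u * b + v * d) ε δ =
      charComponent u v (charComponent c d ε δ) (charComponent a b ε δ) := by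
  obtain ⟨hab, hcd, had⟩ := isSymm_and_isSymm_and_eq_one_of_fromBlocks_mem hN
  have hAB : (modTwo a * (modTwo b)ᵀ).IsSymm := by
    rw [← modTwo_transpose, ← map_mul]; exact hab.map _
  have hCD : (modTwo c * (modTwo d)ᵀ).IsSymm := by
    rw [← modTwo_transpose, ← map_mul]; exact hcd.map _
  have hAD : modTwo a * (modTwo d)ᵀ + modTwo b * (modTwo c)ᵀ = 1 := by
    rw [← ZModModule.sub_eq_add, ← modTwo_transpose, ← modTwo_transpose, ← map_mul, ← map_mul,
      ← map_sub, had, map_one]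
  simp only [charComponent, map_add, map_mul, modTwo_transpose]
  rw [diag_mul_transpose_of_symplectic_rows hAB hCD hAD]
  simp only [add_mulVec, mulVec_add, mulVec_mulVec]
  abel

theorem exists_isSymm_mulVec_add_diag_eq {ε δ : n → ZMod 2} (h : ε ⬝ᵥ δ = 0) :
    ∃ S : Matrix n n (ZMod 2), S.IsSymm ∧ S *ᵥ ε + S.diag = δ := by
  by_cases hε : ε = 0
  · exact ⟨diagonal δ, isSymm_diagonal δ, by simp [hε]⟩
  obtain ⟨j, hj⟩ : ∃ j, ε j = 1 := by
    obtain ⟨j, hj⟩ := Function.ne_iff.mp hε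
    exact ⟨j, (by decide : ∀ x : ZMod 2, x ≠ 0 → x = 1) _ hj⟩
  let X := vecMulVec δ (Pi.single j 1)
  refine ⟨X + Xᵀ, isSymm_add_transpose_self X, ?_⟩
  rw [add_mulVec, diag_add, diag_transpose, ZModModule.add_self, add_zero, transpose_vecMulVec,
    vecMulVec_mulVec, vecMulVec_mulVec, single_one_dotProduct, hj, dotProduct_comm, h]
  simp

variable {g : ℕ}

theorem charAction_fromBlocks (a b c d : Matrix (Fin g) (Fin g) ℤ) (ε δ : Fin g → ZMod 2) :
    charAction (fromBlocks a b c d) ε δ = (charComponent c d ε δ, charComponent a b ε δ) := by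
  simp only [charAction, toBlocks_fromBlocks₁₁, toBlocks_fromBlocks₁₂, toBlocks_fromBlocks₂₁,
    toBlocks_fromBlocks₂₂, ZModModule.sub_eq_add, ZModModule.neg_eq_self]
  rfl

theorem charAction_one (ε δ : Fin g → ZMod 2) : charAction 1 ε δ = (ε, δ) := by
  rw [← fromBlocks_one, charAction_fromBlocks]
  simp [charComponent]

theorem charAction_mul (M : Matrix (Fin g ⊕ Fin g) (Fin g ⊕ Fin g) ℤ)
    {N : Matrix (Fin g ⊕ Fin g) (Fin g ⊕ Fin g) ℤ} (hN : N ∈ symplecticGroup (Fin g) ℤ)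
    (ε δ : Fin g → ZMod 2) :
    charAction (M * N) ε δ = charAction M (charAction N ε δ).1 (charAction N ε δ).2 := by
  obtain ⟨a, b, c, d, rfl⟩ : ∃ a b c d, N = fromBlocks a b c d :=
    ⟨_, _, _, _, (fromBlocks_toBlocks N).symm⟩
  rw [← fromBlocks_toBlocks M]
  simp only [fromBlocks_multiply, charAction_fromBlocks, charComponent_mul hN]

instance : MulAction (symplecticGroup (Fin g) ℤ) ((Fin g → ZMod 2) × (Fin g → ZMod 2)) where
  smul M x := charAction M.1 x.1 x.2
  one_smul x := charAction_one x.1 x.2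
  mul_smul M N x := charAction_mul M.1 N.2 x.1 x.2

theorem smul_eq_charAction (M : symplecticGroup (Fin g) ℤ)
    (x : (Fin g → ZMod 2) × (Fin g → ZMod 2)) :
    M • x = charAction M x.1 x.2 := rfl

theorem orbit_add_snd {S : Matrix (Fin g) (Fin g) (ZMod 2)} (hS : S.IsSymm)
    (ε δ : Fin g → ZMod 2) :
    orbit (symplecticGroup (Fin g) ℤ) (ε, δ + (S *ᵥ ε + S.diag)) =
      orbit (symplecticGroup (Fin g) ℤ) (ε, δ) := by
  obtain ⟨B, hB, rfl⟩ := exists_isSymm_modTwo_eq hS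
  have hmem : fromBlocks 1 B 0 1 ∈ symplecticGroup (Fin g) ℤ := by
    simp [SymplecticGroup.fromBlocks_mem_iff, hB.eq]
  rw [← orbit_smul ⟨_, hmem⟩ (ε, δ), smul_eq_charAction, charAction_fromBlocks]
  refine congrArg _ (Prod.ext ?_ ?_)
  · simp [charComponent]
  · simp only [charComponent, map_one, one_mulVec, hB.eq, one_mul]
    abel

theorem orbit_add_fst {S : Matrix (Fin g) (Fin g) (ZMod 2)} (hS : S.IsSymm)
    (ε δ : Fin g → ZMod 2) :
    orbit (symplecticGroup (Fin g) ℤ) (ε + (S *ᵥ δ + S.diag), δ) =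
      orbit (symplecticGroup (Fin g) ℤ) (ε, δ) := by
  obtain ⟨C, hC, rfl⟩ := exists_isSymm_modTwo_eq hS
  have hmem : fromBlocks 1 0 C 1 ∈ symplecticGroup (Fin g) ℤ := by
    simp [SymplecticGroup.fromBlocks_mem_iff, hC.eq]
  rw [← orbit_smul ⟨_, hmem⟩ (ε, δ), smul_eq_charAction, charAction_fromBlocks]
  refine congrArg _ (Prod.ext ?_ ?_)
  · simp only [charComponent, map_one, one_mulVec, transpose_one, mul_one]
    abel
  · simp [charComponent]

theorem orbit_eq_orbit_zero {ε δ : Fin g → ZMod 2} (h : ε ⬝ᵥ δ = 0) :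
    orbit (symplecticGroup (Fin g) ℤ) (ε, δ) = orbit (symplecticGroup (Fin g) ℤ) 0 := by
  obtain ⟨S, hS, hSδ⟩ := exists_isSymm_mulVec_add_diag_eq h
  obtain ⟨T, hT, hTε⟩ := exists_isSymm_mulVec_add_diag_eq (zero_dotProduct ε)
  calc orbit (symplecticGroup (Fin g) ℤ) (ε, δ)
      = orbit (symplecticGroup (Fin g) ℤ) (ε, δ + (S *ᵥ ε + S.diag)) :=
        (orbit_add_snd hS ε δ).symm
    _ = orbit (symplecticGroup (Fin g) ℤ) (ε, 0) := by rw [hSδ, ZModModule.add_self]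
    _ = orbit (symplecticGroup (Fin g) ℤ) (ε + (T *ᵥ 0 + T.diag), 0) :=
        (orbit_add_fst hT ε 0).symm
    _ = orbit (symplecticGroup (Fin g) ℤ) 0 := by
        rw [hTε, ZModModule.add_self, Prod.mk_zero_zero]

end ThetaCharacteristic

/-- `Sp(2g, ℤ)` acts transitively on the set of even characteristics. -/
theorem symplectic_transitive_on_even_characteristics {g : ℕ}
    (ε δ ε' δ' : Fin g → ZMod 2)
    (h : ∑ i, ε i * δ i = 0) (h' : ∑ i, ε' i * δ' i = 0) :
    ∃ M ∈ Matrix.symplecticGroup (Fin g) ℤ,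
      charAction M ε δ = (ε', δ') := by
  have horbit := (ThetaCharacteristic.orbit_eq_orbit_zero h').trans
    (ThetaCharacteristic.orbit_eq_orbit_zero h).symm
  obtain ⟨M, hM⟩ := MulAction.mem_orbit_iff.mp (MulAction.orbit_eq_iff.mp horbit)
  exact ⟨M, M.2, hM⟩
end

section
/- For τ ∈ H_g with θ[0,0](τ,0) = 0, the point x = τε/2 + δ/2 (ε,δ ∈ {0,1}^g even) satisfies: x is a singular point of the divisor {z : θ[0,0](τ,z) = 0} if and only if θ[ε,δ](τ,0) = 0. That is, θ[0,0](τ,x) = 0 and ∇_z θ[0,0](τ,x) = 0 if and only if θ[ε,δ](τ,0) = 0. -/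
open scoped Real

/-- The Siegel upper half-space condition: `τ` is symmetric with positive
definite imaginary part. -/
def IsSiegel {g : ℕ} (τ : Matrix (Fin g) (Fin g) ℂ) : Prop :=
  τ.IsSymm ∧ (Matrix.of fun i j => (τ i j).im).PosDef

/-- The theta function with characteristic `[ε, δ]`. -/
noncomputable def theta {g : ℕ} (ε δ : Fin g → ℤ) (τ : Matrix (Fin g) (Fin g) ℂ)
    (z : Fin g → ℂ) : ℂ :=
  ∑' m : Fin g → ℤ,
    Complex.exp (π * Complex.I *
      (dotProduct (fun i => (m i : ℂ) + (ε i : ℂ) / 2)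
          (τ.mulVec fun i => (m i : ℂ) + (ε i : ℂ) / 2) +
        2 * dotProduct (fun i => (m i : ℂ) + (ε i : ℂ) / 2)
          (fun i => z i + (δ i : ℂ) / 2)))

open Complex in
lemma dot_mulVec_symm {g : ℕ} (τ : Matrix (Fin g) (Fin g) ℂ) (hτ : τ.IsSymm)
    (a b : Fin g → ℂ) :
    dotProduct a (τ.mulVec b) = dotProduct b (τ.mulVec a) := by
  rw [Matrix.dotProduct_mulVec, ← Matrix.mulVec_transpose, hτ.eq, dotProduct_comm]

open Complex in
/-- The shift identity `θ[0,0](τ, τε/2 + δ/2 + z) = e(z) θ[ε,δ](τ,z)`. -/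
lemma theta_shift {g : ℕ} (ε δ : Fin g → ℤ) (τ : Matrix (Fin g) (Fin g) ℂ)
    (hτ : τ.IsSymm) (z : Fin g → ℂ) :
    theta 0 0 τ (fun i => (τ.mulVec fun j => (ε j : ℂ) / 2) i + (δ i : ℂ) / 2 + z i)
      = Complex.exp (-(π * I) *
          (dotProduct (fun i => (ε i : ℂ) / 2)
              (τ.mulVec fun i => (ε i : ℂ) / 2)
            + 2 * dotProduct (fun i => (ε i : ℂ) / 2) (fun i => (δ i : ℂ) / 2)
            + 2 * dotProduct (fun i => (ε i : ℂ) / 2) z))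
        * theta ε δ τ z := by
  unfold theta
  rw [← tsum_mul_left]
  congr 1; funext m
  rw [← Complex.exp_add]
  congr 1
  have e1 : (fun i => (m i : ℂ) + (((0 : Fin g → ℤ)) i : ℂ) / 2) = (fun i => (m i : ℂ)) := by
    funext i; simp
  have e2 : (fun i => ((τ.mulVec fun j => (ε j : ℂ) / 2) i + (δ i : ℂ) / 2 + z i)
        + (((0 : Fin g → ℤ)) i : ℂ) / 2)
      = (τ.mulVec fun j => (ε j : ℂ) / 2) + ((fun i => (δ i : ℂ) / 2) + z) := by
    funext i; simp [Pi.add_apply]; ring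
  have e3 : (fun i => (m i : ℂ) + (ε i : ℂ) / 2)
      = (fun i => (m i : ℂ)) + (fun i => (ε i : ℂ) / 2) := rfl
  have e4 : (fun i => z i + (δ i : ℂ) / 2) = z + (fun i => (δ i : ℂ) / 2) := rfl
  rw [e1, e2, e3, e4]
  have hsym := dot_mulVec_symm τ hτ (fun i => (ε i : ℂ) / 2) (fun i => (m i : ℂ))
  simp only [add_dotProduct, dotProduct_add, Matrix.mulVec_add]
  rw [hsym]
  ring

open Complex in
/-- Evenness of the theta function with even characteristic. -/
lemma theta_neg {g : ℕ} (ε δ : Fin g → ℤ) (heven : (∑ i, ε i * δ i) % 2 = 0)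
    (τ : Matrix (Fin g) (Fin g) ℂ) (z : Fin g → ℂ) :
    theta ε δ τ (-z) = theta ε δ τ z := by
  obtain ⟨j, hj⟩ := Int.even_iff.mpr heven
  unfold theta
  rw [← Equiv.tsum_eq ((Equiv.neg (Fin g → ℤ)).trans (Equiv.subRight ε))]
  congr 1; funext m
  have hv : (fun i => ((((Equiv.neg (Fin g → ℤ)).trans (Equiv.subRight ε)) m) i : ℂ)
        + (ε i : ℂ) / 2) = -(fun i => (m i : ℂ) + (ε i : ℂ) / 2) := by
    funext i
    simp only [Equiv.trans_apply, Equiv.neg_apply, Equiv.subRight_apply, Pi.sub_apply,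
      Pi.neg_apply]
    push_cast; ring
  rw [hv]
  have hv2 : (fun i => (m i : ℂ) + (ε i : ℂ) / 2)
      = (fun i => (m i : ℂ)) + (fun i => (ε i : ℂ) / 2) := rfl
  rw [hv2]
  have e5 : (fun i => (-z) i + (δ i : ℂ) / 2) = (-z) + (fun i => (δ i : ℂ) / 2) := rfl
  have e6 : (fun i => z i + (δ i : ℂ) / 2) = z + (fun i => (δ i : ℂ) / 2) := rfl
  have hd1 : dotProduct (fun i => (m i : ℂ)) (fun i => (δ i : ℂ) / 2)
      = ((∑ i, m i * δ i : ℤ) : ℂ) / 2 := by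
    simp only [dotProduct]
    push_cast
    rw [Finset.sum_div]
    exact Finset.sum_congr rfl fun i _ => by ring
  have hd2 : dotProduct (fun i => (ε i : ℂ) / 2) (fun i => (δ i : ℂ) / 2)
      = (j : ℂ) / 2 := by
    simp only [dotProduct]
    have h4 : (∑ i, (ε i : ℂ) / 2 * ((δ i : ℂ) / 2)) = ((∑ i, ε i * δ i : ℤ) : ℂ) / 4 := by
      push_cast
      rw [Finset.sum_div]
      exact Finset.sum_congr rfl fun i _ => by ring
    rw [h4, hj]
    push_cast; ring
  rw [show (π * I * (dotProduct (-((fun i => (m i : ℂ)) + fun i => (ε i : ℂ) / 2))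
        (τ.mulVec (-((fun i => (m i : ℂ)) + fun i => (ε i : ℂ) / 2)))
      + 2 * dotProduct (-((fun i => (m i : ℂ)) + fun i => (ε i : ℂ) / 2))
        (fun i => (-z) i + (δ i : ℂ) / 2)))
    = (π * I * (dotProduct ((fun i => (m i : ℂ)) + fun i => (ε i : ℂ) / 2)
        (τ.mulVec ((fun i => (m i : ℂ)) + fun i => (ε i : ℂ) / 2))
      + 2 * dotProduct ((fun i => (m i : ℂ)) + fun i => (ε i : ℂ) / 2)
        (fun i => z i + (δ i : ℂ) / 2)))
      + ((-(∑ i, m i * δ i) - j : ℤ) : ℂ) * (2 * π * I) from ?_]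
  · rw [Complex.exp_add, Complex.exp_int_mul_two_pi_mul_I, mul_one]
  · rw [e5, e6]
    simp only [neg_dotProduct, dotProduct_neg, Matrix.mulVec_neg, neg_neg,
      dotProduct_add, add_dotProduct, Matrix.mulVec_add, hd1, hd2,
      Int.cast_sub, Int.cast_neg]
    ring

lemma fderiv_zero_of_even {E F : Type*} [NormedAddCommGroup E] [NormedSpace ℂ E]
    [NormedAddCommGroup F] [NormedSpace ℂ F] {f : E → F} (hf : ∀ z, f (-z) = f z) :
    fderiv ℂ f 0 = 0 := by
  by_cases hd : DifferentiableAt ℂ f 0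
  · have h1 := hd.hasFDerivAt
    have hneg : HasFDerivAt (fun z : E => -z) (-(ContinuousLinearMap.id ℂ E)) (0 : E) := by
      exact (hasFDerivAt_id (0 : E)).neg
    have h2 : HasFDerivAt (fun z => f (-z))
        ((fderiv ℂ f 0).comp (-(ContinuousLinearMap.id ℂ E))) (0 : E) := by
      have h1' : HasFDerivAt f (fderiv ℂ f 0) (-(0 : E)) := by simpa using h1
      have := h1'.comp (0 : E) hneg
      simpa [Function.comp_def] using this
    rw [funext hf] at h2
    have h3 := h1.unique h2
    have h4 : (fderiv ℂ f 0).comp (-(ContinuousLinearMap.id ℂ E)) = -(fderiv ℂ f 0) := by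
      ext v; simp
    rw [h4] at h3
    have h5 : (2 : ℂ) • fderiv ℂ f 0 = 0 := by
      rw [two_smul]; nth_rewrite 2 [h3]; simp
    exact (smul_eq_zero.mp h5).resolve_left two_ne_zero
  · exact fderiv_zero_of_not_differentiableAt hd

lemma fderiv_translate {E F : Type*} [NormedAddCommGroup E] [NormedSpace ℂ E]
    [NormedAddCommGroup F] [NormedSpace ℂ F] (f : E → F) (x : E) :
    fderiv ℂ f x = fderiv ℂ (fun z => f (x + z)) 0 := by
  by_cases hd : DifferentiableAt ℂ f x
  · have h1 := hd.hasFDerivAt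
    have ht : HasFDerivAt (fun z : E => x + z) (ContinuousLinearMap.id ℂ E) (0 : E) :=
      (hasFDerivAt_id (0 : E)).const_add x
    have h2 : HasFDerivAt (fun z => f (x + z)) (fderiv ℂ f x) (0 : E) := by
      have h1' : HasFDerivAt f (fderiv ℂ f x) (x + (0 : E)) := by simpa using h1
      have := h1'.comp (0 : E) ht
      simpa [Function.comp_def] using this
    exact h2.fderiv.symm
  · have hd2 : ¬ DifferentiableAt ℂ (fun z => f (x + z)) 0 := by
      intro hc
      apply hd
      have hc' : DifferentiableAt ℂ (fun z => f (x + z)) (x - x) := by simpa using hc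
      have hi : DifferentiableAt ℂ (fun z : E => z - x) x := differentiableAt_id.sub_const x
      have h3 : DifferentiableAt ℂ ((fun z => f (x + z)) ∘ (fun z => z - x)) x := by
        apply DifferentiableAt.comp
        · simpa using hc
        · exact hi
      have h4 : ((fun z => f (x + z)) ∘ (fun z => z - x)) = f := by
        funext z; simp [Function.comp]
      rwa [h4] at h3
    rw [fderiv_zero_of_not_differentiableAt hd, fderiv_zero_of_not_differentiableAt hd2]

/-- For `τ ∈ H_g` with vanishing theta-null `θ[0,0](τ,0) = 0` and an even
characteristic `[ε,δ]`, the point of order two `x = τε/2 + δ/2` is a singular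
point of the theta divisor `{z : θ[0,0](τ,z) = 0}` (i.e. the theta function
and its `z`-gradient both vanish at `x`) if and only if the theta constant
`θ[ε,δ](τ,0)` vanishes. -/
theorem singular_at_two_torsion_iff {g : ℕ} (ε δ : Fin g → ℤ)
    (hε : ∀ i, ε i = 0 ∨ ε i = 1) (hδ : ∀ i, δ i = 0 ∨ δ i = 1)
    (heven : (∑ i, ε i * δ i) % 2 = 0)
    (τ : Matrix (Fin g) (Fin g) ℂ) (hτ : IsSiegel τ)
    (hnull : theta 0 0 τ 0 = 0) :
    (theta 0 0 τ
          (fun i => (τ.mulVec fun j => (ε j : ℂ) / 2) i + (δ i : ℂ) / 2) = 0 ∧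
        fderiv ℂ (fun z => theta 0 0 τ z)
          (fun i => (τ.mulVec fun j => (ε j : ℂ) / 2) i + (δ i : ℂ) / 2) = 0) ↔
      theta ε δ τ 0 = 0 := by
  obtain ⟨hτs, -⟩ := hτ
  set x : Fin g → ℂ := fun i => (τ.mulVec fun j => (ε j : ℂ) / 2) i + (δ i : ℂ) / 2 with hxdef
  set u : (Fin g → ℂ) → ℂ := fun z => Complex.exp (-(π * Complex.I) *
      (dotProduct (fun i => (ε i : ℂ) / 2) (τ.mulVec fun i => (ε i : ℂ) / 2)
        + 2 * dotProduct (fun i => (ε i : ℂ) / 2) (fun i => (δ i : ℂ) / 2)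
        + 2 * dotProduct (fun i => (ε i : ℂ) / 2) z)) with hudef
  have key : ∀ z : Fin g → ℂ, theta 0 0 τ (x + z) = u z * theta ε δ τ z := fun z =>
    theta_shift ε δ τ hτs z
  have huz : ∀ z, u z ≠ 0 := fun z => Complex.exp_ne_zero _
  have hval : theta 0 0 τ x = u 0 * theta ε δ τ 0 := by
    have := key 0
    rwa [add_zero] at this
  constructor
  · rintro ⟨h1, -⟩
    rw [hval] at h1
    exact (mul_eq_zero.mp h1).resolve_left (huz 0)
  · intro h0
    refine ⟨by rw [hval, h0, mul_zero], ?_⟩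
    have hgrad_h : fderiv ℂ (theta ε δ τ) 0 = 0 :=
      fderiv_zero_of_even (fun z => theta_neg ε δ heven τ z)
    rw [fderiv_translate]
    have hfun : (fun z => theta 0 0 τ (x + z)) = fun z => u z * theta ε δ τ z :=
      funext key
    rw [show (fun z => (fun z' => theta 0 0 τ z') (x + z)) = fun z => u z * theta ε δ τ z
      from funext key]
    have hdu : DifferentiableAt ℂ u 0 := by
      rw [hudef]
      apply DifferentiableAt.cexp
      apply DifferentiableAt.const_mul
      apply DifferentiableAt.add
      · exact differentiableAt_const _
      · apply DifferentiableAt.const_mul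
        unfold dotProduct
        apply DifferentiableAt.fun_sum
        intro i _
        exact ((ContinuousLinearMap.proj i : (Fin g → ℂ) →L[ℂ] ℂ).differentiableAt).const_mul _
    by_cases hdh : DifferentiableAt ℂ (theta ε δ τ) 0
    · rw [(hdu.hasFDerivAt.fun_mul hdh.hasFDerivAt).fderiv, hgrad_h, h0]
      ext v; simp
    · apply fderiv_zero_of_not_differentiableAt
      intro hc
      apply hdh
      have h5 : DifferentiableAt ℂ (fun z => (u z)⁻¹ * (u z * theta ε δ τ z)) 0 :=
        (hdu.inv (huz 0)).mul hc
      have hfe : (fun z => (u z)⁻¹ * (u z * theta ε δ τ z)) = theta ε δ τ := by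
        funext z; rw [inv_mul_cancel_left₀ (huz z)]
      rwa [hfe] at h5
end
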